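/- The graph G_T is a tree: it is connected, and it contains no cycles. -/

import Mathlib

/-- Two cosets `x ∈ Γ/G₁`, `y ∈ Γ/G₂` meet, i.e. there is `ε ∈ Γ` with `εG₁ = x` and
`εG₂ = y`. -/
def cosetMeet {Γ : Type*} [Group Γ] (G₁ G₂ : Subgroup Γ) (x : Γ ⧸ G₁) (y : Γ ⧸ G₂) : Prop :=
  ∃ ε : Γ, (QuotientGroup.mk ε : Γ ⧸ G₁) = x ∧ (QuotientGroup.mk ε : Γ ⧸ G₂) = y

/-- The Bass–Serre graph of `Γ = G₁ ∗_H G₂`: the bipartite graph on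
`V = Γ/G₁ ⊔ Γ/G₂` in which `γG₁` and `δG₂` are adjacent iff `γG₁ ∩ δG₂ ≠ ∅`. -/
def bsGraph {Γ : Type*} [Group Γ] (G₁ G₂ : Subgroup Γ) :
    SimpleGraph ((Γ ⧸ G₁) ⊕ (Γ ⧸ G₂)) where
  Adj v w :=
    match v, w with
    | Sum.inl x, Sum.inr y => cosetMeet G₁ G₂ x y
    | Sum.inr y, Sum.inl x => cosetMeet G₁ G₂ x y
    | _, _ => False
  symm := by
    constructor
    rintro (x | x) (y | y) h <;> simp_all
  loopless := by
    constructor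
    rintro (x | x) h <;> simp_all

namespace Stmt12Aux

open SimpleGraph

variable {Γ : Type*} [Group Γ] (G₁ G₂ H : Subgroup Γ)

/-- `ε` represents the coset-vertex `u`. -/
def bsRep : ((Γ ⧸ G₁) ⊕ (Γ ⧸ G₂)) → Γ → Prop
  | Sum.inl x, ε => (QuotientGroup.mk ε : Γ ⧸ G₁) = x
  | Sum.inr y, ε => (QuotientGroup.mk ε : Γ ⧸ G₂) = y

/-- The "side" subgroup opposite to a vertex. -/
def bsSide : ((Γ ⧸ G₁) ⊕ (Γ ⧸ G₂)) → Subgroup Γ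
  | Sum.inl _ => G₂
  | Sum.inr _ => G₁

variable {G₁ G₂}

lemma adj_inl {x : Γ ⧸ G₁} {w} (h : (bsGraph G₁ G₂).Adj (Sum.inl x) w) :
    ∃ y, w = Sum.inr y ∧ cosetMeet G₁ G₂ x y := by
  cases w with
  | inl x' => exact (h : False).elim
  | inr y => exact ⟨y, rfl, h⟩

lemma adj_inr {y : Γ ⧸ G₂} {w} (h : (bsGraph G₁ G₂).Adj (Sum.inr y) w) :
    ∃ x, w = Sum.inl x ∧ cosetMeet G₁ G₂ x y := by
  cases w with
  | inl x => exact ⟨x, rfl, h⟩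
  | inr y' => exact (h : False).elim

lemma adj_of_meet {x : Γ ⧸ G₁} {y : Γ ⧸ G₂} (h : cosetMeet G₁ G₂ x y) :
    (bsGraph G₁ G₂).Adj (Sum.inl x) (Sum.inr y) := h


lemma bs_word (H : Subgroup Γ) (hH1 : H ≤ G₁) (hH2 : H ≤ G₂) (hmeet : G₁ ⊓ G₂ = H) :
    ∀ {u v : (Γ ⧸ G₁) ⊕ (Γ ⧸ G₂)} (p : (bsGraph G₁ G₂).Walk u v), p.IsPath →
    ∃ (ε ζ : Γ) (l : List Γ),
      bsRep G₁ G₂ u ε ∧ bsRep G₁ G₂ v ζ ∧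
      (1 ≤ p.length → bsRep G₁ G₂ (p.getVert 1) ε) ∧
      (∀ g ∈ l, (g ∈ G₁ ∨ g ∈ G₂) ∧ g ∉ H) ∧
      l.Chain' (fun g g' => ¬(g ∈ G₁ ∧ g' ∈ G₁) ∧ ¬(g ∈ G₂ ∧ g' ∈ G₂)) ∧
      l.prod = ε⁻¹ * ζ ∧
      (l = [] ↔ p.length ≤ 1) ∧ (l = [] → ε = ζ) ∧
      (∀ a, l.head? = some a → a ∈ bsSide G₁ G₂ u ∧ a ∉ H) ∧
      (∀ a, l.getLast? = some a → a ∈ bsSide G₁ G₂ v ∧ a ∉ H) := by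
  intro u v p
  induction p with
  | @nil u =>
    intro _
    obtain ⟨ε, hε⟩ : ∃ ε, bsRep G₁ G₂ u ε := by
      cases u with
      | inl x => exact ⟨x.out, QuotientGroup.out_eq' x⟩
      | inr y => exact ⟨y.out, QuotientGroup.out_eq' y⟩
    refine ⟨ε, ε, [], hε, hε, by simp, by simp, List.isChain_nil, by simp, by simp, fun _ => rfl,
      by simp, by simp⟩
  | @cons u u' v' h q ih =>
    intro hp
    rw [SimpleGraph.Walk.cons_isPath_iff] at hp
    obtain ⟨hq, hu⟩ := hp
    cases u with
    | inl x =>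
      obtain ⟨y, rfl, ε, hε1, hε2⟩ := adj_inl h
      cases q with
      | nil =>
        refine ⟨ε, ε, [], hε1, hε2, ?_, by simp, List.isChain_nil, by simp, by simp, fun _ => rfl,
          by simp, by simp⟩
        intro _
        rw [show (1:ℕ) = 0 + 1 from rfl, SimpleGraph.Walk.getVert_cons_succ, SimpleGraph.Walk.getVert_zero]
        exact hε2
      | cons h' q'' =>
        rename_i u'' _
        obtain ⟨x'', rfl, hcm'⟩ := adj_inr h'
        obtain ⟨ζ', ζ, l, hζ'rep, hζrep, hsec, hval, hchain, hprod, hiff, hemp, hhead, hlast⟩ :=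
          ih hq
        have hζ'G1 : (QuotientGroup.mk ζ' : Γ ⧸ G₁) = x'' := by
          have := hsec (by simp [SimpleGraph.Walk.length_cons])
          rwa [show (1:ℕ) = 0 + 1 from rfl, SimpleGraph.Walk.getVert_cons_succ, SimpleGraph.Walk.getVert_zero] at this
        have haG2 : ε⁻¹ * ζ' ∈ G₂ :=
          QuotientGroup.eq.mp (hε2.trans hζ'rep.symm)
        have haH : ε⁻¹ * ζ' ∉ H := by
          intro hmem
          have hG1 : ε⁻¹ * ζ' ∈ G₁ := hH1 hmem
          have hxx : x = x'' := by
            rw [← hε1, ← hζ'G1]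
            exact QuotientGroup.eq.mpr hG1
          apply hu
          rw [SimpleGraph.Walk.support_cons]
          exact List.mem_cons_of_mem _ (hxx ▸ q''.start_mem_support)
        have hsecnew : 1 ≤ (SimpleGraph.Walk.cons h (SimpleGraph.Walk.cons h' q'')).length →
            bsRep G₁ G₂ ((SimpleGraph.Walk.cons h (SimpleGraph.Walk.cons h' q'')).getVert 1) ε := by
          intro _
          rw [show (1:ℕ) = 0 + 1 from rfl, SimpleGraph.Walk.getVert_cons_succ, SimpleGraph.Walk.getVert_zero]
          exact hε2
        cases l with
        | nil =>
          have hζζ' : ζ' = ζ := hemp rfl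
          have hq2len : q''.length = 0 := by
            have := hiff.mp rfl
            simp only [SimpleGraph.Walk.length_cons] at this
            omega
          have hv : Sum.inl x'' = v' := SimpleGraph.Walk.eq_of_length_eq_zero hq2len
          refine ⟨ε, ζ, [ε⁻¹ * ζ'], hε1, hζrep, hsecnew, ?_, List.isChain_singleton _, by simp [hζζ'], ?_, ?_,
            ?_, ?_⟩
          · intro g hg
            simp at hg
            subst hg
            exact ⟨Or.inr haG2, haH⟩
          · constructor <;> intro hcon
            · simp at hcon
            · simp [SimpleGraph.Walk.length_cons] at hcon
          · intro hcon; simp at hcon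
          · intro a ha
            simp at ha
            subst ha
            exact ⟨haG2, haH⟩
          · intro a ha
            simp at ha
            subst ha
            rw [← hv]
            exact ⟨haG2, haH⟩
        | cons c t =>
          obtain ⟨hcG1, hcH⟩ := hhead c rfl
          refine ⟨ε, ζ, (ε⁻¹ * ζ') :: c :: t, hε1, hζrep, hsecnew, ?_, ?_, ?_, ?_, ?_, ?_, ?_⟩
          · intro g hg
            rcases List.mem_cons.mp hg with rfl | hg'
            · exact ⟨Or.inr haG2, haH⟩
            · exact hval g hg'
          · unfold List.Chain'
            rw [List.isChain_cons_cons]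
            refine ⟨⟨?_, ?_⟩, hchain⟩
            · rintro ⟨haG1, -⟩
              exact haH (hmeet ▸ ⟨haG1, haG2⟩)
            · rintro ⟨-, hcG2⟩
              exact hcH (hmeet ▸ ⟨hcG1, hcG2⟩)
          · rw [List.prod_cons, hprod]
            group
          · simp [SimpleGraph.Walk.length_cons]
          · intro hcon; simp at hcon
          · intro a ha
            simp at ha
            subst ha
            exact ⟨haG2, haH⟩
          · intro a ha
            rw [List.getLast?_cons_cons] at ha
            exact hlast a ha
    | inr y =>
      obtain ⟨x, rfl, ε, hε1, hε2⟩ := adj_inr h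
      cases q with
      | nil =>
        refine ⟨ε, ε, [], hε2, hε1, ?_, by simp, List.isChain_nil, by simp, by simp, fun _ => rfl,
          by simp, by simp⟩
        intro _
        rw [show (1:ℕ) = 0 + 1 from rfl, SimpleGraph.Walk.getVert_cons_succ, SimpleGraph.Walk.getVert_zero]
        exact hε1
      | cons h' q'' =>
        rename_i u'' _
        obtain ⟨y'', rfl, hcm'⟩ := adj_inl h'
        obtain ⟨ζ', ζ, l, hζ'rep, hζrep, hsec, hval, hchain, hprod, hiff, hemp, hhead, hlast⟩ :=
          ih hq
        have hζ'G2 : (QuotientGroup.mk ζ' : Γ ⧸ G₂) = y'' := by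
          have := hsec (by simp [SimpleGraph.Walk.length_cons])
          rwa [show (1:ℕ) = 0 + 1 from rfl, SimpleGraph.Walk.getVert_cons_succ, SimpleGraph.Walk.getVert_zero] at this
        have haG1 : ε⁻¹ * ζ' ∈ G₁ :=
          QuotientGroup.eq.mp (hε1.trans hζ'rep.symm)
        have haH : ε⁻¹ * ζ' ∉ H := by
          intro hmem
          have hG2 : ε⁻¹ * ζ' ∈ G₂ := hH2 hmem
          have hyy : y = y'' := by
            rw [← hε2, ← hζ'G2]
            exact QuotientGroup.eq.mpr hG2
          apply hu
          rw [SimpleGraph.Walk.support_cons]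
          exact List.mem_cons_of_mem _ (hyy ▸ q''.start_mem_support)
        have hsecnew : 1 ≤ (SimpleGraph.Walk.cons h (SimpleGraph.Walk.cons h' q'')).length →
            bsRep G₁ G₂ ((SimpleGraph.Walk.cons h (SimpleGraph.Walk.cons h' q'')).getVert 1) ε := by
          intro _
          rw [show (1:ℕ) = 0 + 1 from rfl, SimpleGraph.Walk.getVert_cons_succ, SimpleGraph.Walk.getVert_zero]
          exact hε1
        cases l with
        | nil =>
          have hζζ' : ζ' = ζ := hemp rfl
          have hq2len : q''.length = 0 := by
            have := hiff.mp rfl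
            simp only [SimpleGraph.Walk.length_cons] at this
            omega
          have hv : Sum.inr y'' = v' := SimpleGraph.Walk.eq_of_length_eq_zero hq2len
          refine ⟨ε, ζ, [ε⁻¹ * ζ'], hε2, hζrep, hsecnew, ?_, List.isChain_singleton _, by simp [hζζ'], ?_, ?_,
            ?_, ?_⟩
          · intro g hg
            simp at hg
            subst hg
            exact ⟨Or.inl haG1, haH⟩
          · constructor <;> intro hcon
            · simp at hcon
            · simp [SimpleGraph.Walk.length_cons] at hcon
          · intro hcon; simp at hcon
          · intro a ha
            simp at ha
            subst ha
            exact ⟨haG1, haH⟩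
          · intro a ha
            simp at ha
            subst ha
            rw [← hv]
            exact ⟨haG1, haH⟩
        | cons c t =>
          obtain ⟨hcG2, hcH⟩ := hhead c rfl
          refine ⟨ε, ζ, (ε⁻¹ * ζ') :: c :: t, hε2, hζrep, hsecnew, ?_, ?_, ?_, ?_, ?_, ?_, ?_⟩
          · intro g hg
            rcases List.mem_cons.mp hg with rfl | hg'
            · exact ⟨Or.inl haG1, haH⟩
            · exact hval g hg'
          · unfold List.Chain'
            rw [List.isChain_cons_cons]
            refine ⟨⟨?_, ?_⟩, hchain⟩
            · rintro ⟨-, hcG1⟩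
              exact hcH (hmeet ▸ ⟨hcG1, hcG2⟩)
            · rintro ⟨haG2, -⟩
              exact haH (hmeet ▸ ⟨haG1, haG2⟩)
          · rw [List.prod_cons, hprod]
            group
          · simp [SimpleGraph.Walk.length_cons]
          · intro hcon; simp at hcon
          · intro a ha
            simp at ha
            subst ha
            exact ⟨haG1, haH⟩
          · intro a ha
            rw [List.getLast?_cons_cons] at ha
            exact hlast a ha


lemma bs_no_cycle_inl (H : Subgroup Γ) (hH1 : H ≤ G₁) (hH2 : H ≤ G₂) (hmeet : G₁ ⊓ G₂ = H)
    (hfree : ∀ l : List Γ, l ≠ [] →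
      (∀ g ∈ l, (g ∈ G₁ ∨ g ∈ G₂) ∧ g ∉ H) →
      l.Chain' (fun g g' => ¬(g ∈ G₁ ∧ g' ∈ G₁) ∧ ¬(g ∈ G₂ ∧ g' ∈ G₂)) →
      l.prod ∉ H)
    (x : Γ ⧸ G₁) (p : (bsGraph G₁ G₂).Walk (Sum.inl x) (Sum.inl x)) : ¬ p.IsCycle := by
  intro hcyc
  have hlen := hcyc.three_le_length
  cases p with
  | nil => exact hcyc.ne_nil rfl
  | @cons _ u' _ h q =>
    obtain ⟨y, rfl, ε, hε1, hε2⟩ := adj_inl h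
    rw [SimpleGraph.Walk.cons_isCycle_iff] at hcyc
    obtain ⟨hqpath, hedge⟩ := hcyc
    obtain ⟨ζ', ζ, l, hζ'rep, hζrep, hsec, hval, hchain, hprod, hiff, hemp, hhead, hlast⟩ :=
      bs_word H hH1 hH2 hmeet q hqpath
    have hqlen : 2 ≤ q.length := by
      simp [SimpleGraph.Walk.length_cons] at hlen
      omega
    have hlne : l ≠ [] := by
      intro hnil
      have := hiff.mp hnil
      omega
    cases q with
    | @cons _ u'' _ h' q'' =>
      obtain ⟨x'', rfl, hcm'⟩ := adj_inr h'
      have hζ'G1 : (QuotientGroup.mk ζ' : Γ ⧸ G₁) = x'' := by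
        have := hsec (by simp [SimpleGraph.Walk.length_cons])
        rwa [show (1:ℕ) = 0 + 1 from rfl, SimpleGraph.Walk.getVert_cons_succ, SimpleGraph.Walk.getVert_zero] at this
      have haG2 : ε⁻¹ * ζ' ∈ G₂ := QuotientGroup.eq.mp (hε2.trans hζ'rep.symm)
      have hxne : x ≠ x'' := by
        intro heq
        apply hedge
        rw [SimpleGraph.Walk.edges_cons]
        exact List.mem_cons.mpr (Or.inl (by rw [← heq, Sym2.eq_swap]))
      have haH : ε⁻¹ * ζ' ∉ H := by
        intro hmem
        exact hxne (by rw [← hε1, ← hζ'G1]; exact QuotientGroup.eq.mpr (hH1 hmem))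
      obtain ⟨c, t, rfl⟩ : ∃ c t, l = c :: t := by
        cases l with
        | nil => exact absurd rfl hlne
        | cons c t => exact ⟨c, t, rfl⟩
      obtain ⟨hcG1, hcH⟩ := hhead c rfl
      have hbG1 : ζ⁻¹ * ε ∈ G₁ := QuotientGroup.eq.mp (hζrep.trans hε1.symm)
      have hwval : ∀ g ∈ (ε⁻¹ * ζ') :: c :: t, (g ∈ G₁ ∨ g ∈ G₂) ∧ g ∉ H := by
        intro g hg
        rcases List.mem_cons.mp hg with rfl | hg'
        · exact ⟨Or.inr haG2, haH⟩
        · exact hval g hg'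
      have hwchain : ((ε⁻¹ * ζ') :: c :: t).Chain'
          (fun g g' => ¬(g ∈ G₁ ∧ g' ∈ G₁) ∧ ¬(g ∈ G₂ ∧ g' ∈ G₂)) := by
        unfold List.Chain'
        rw [List.isChain_cons_cons]
        refine ⟨⟨?_, ?_⟩, hchain⟩
        · rintro ⟨haG1, -⟩
          exact haH (hmeet ▸ ⟨haG1, haG2⟩)
        · rintro ⟨-, hcG2⟩
          exact hcH (hmeet ▸ ⟨hcG1, hcG2⟩)
      have hwprod : ((ε⁻¹ * ζ') :: c :: t).prod = ε⁻¹ * ζ := by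
        rw [List.prod_cons, hprod]
        group
      by_cases hbH : ζ⁻¹ * ε ∈ H
      · refine hfree _ (by simp) hwval hwchain ?_
        rw [hwprod]
        have : ε⁻¹ * ζ = (ζ⁻¹ * ε)⁻¹ := by group
        rw [this]
        exact H.inv_mem hbH
      · refine hfree (((ε⁻¹ * ζ') :: c :: t) ++ [ζ⁻¹ * ε]) (by simp) ?_ ?_ ?_
        · intro g hg
          rcases List.mem_append.mp hg with hg' | hg'
          · exact hwval g hg'
          · simp at hg'
            subst hg'
            exact ⟨Or.inl hbG1, hbH⟩
        · unfold List.Chain'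
          rw [List.isChain_append]
          refine ⟨hwchain, List.isChain_singleton _, ?_⟩
          intro a ha b hb
          simp at hb
          subst hb
          have ha' : (c :: t).getLast? = some a := by
            rwa [List.getLast?_cons_cons] at ha
          obtain ⟨haG2', haH'⟩ := hlast a ha'
          refine ⟨?_, ?_⟩
          · rintro ⟨haG1', -⟩
            exact haH' (hmeet ▸ ⟨haG1', haG2'⟩)
          · rintro ⟨-, hbG2⟩
            exact hbH (hmeet ▸ ⟨hbG1, hbG2⟩)
        · rw [List.prod_append, hwprod]
          simp only [List.prod_singleton]
          group
          exact H.one_mem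


def bsSwap (G₁ G₂ : Subgroup Γ) : (bsGraph G₁ G₂) ≃g (bsGraph G₂ G₁) where
  toEquiv := Equiv.sumComm _ _
  map_rel_iff' := by
    rintro (x | y) (x' | y')
    · exact Iff.rfl
    · exact exists_congr fun ε => and_comm
    · exact exists_congr fun ε => and_comm
    · exact Iff.rfl

lemma bs_acyclic (H : Subgroup Γ) (hH1 : H ≤ G₁) (hH2 : H ≤ G₂) (hmeet : G₁ ⊓ G₂ = H)
    (hfree : ∀ l : List Γ, l ≠ [] →
      (∀ g ∈ l, (g ∈ G₁ ∨ g ∈ G₂) ∧ g ∉ H) →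
      l.Chain' (fun g g' => ¬(g ∈ G₁ ∧ g' ∈ G₁) ∧ ¬(g ∈ G₂ ∧ g' ∈ G₂)) →
      l.prod ∉ H) :
    (bsGraph G₁ G₂).IsAcyclic := by
  intro v c hc
  cases v with
  | inl x => exact bs_no_cycle_inl H hH1 hH2 hmeet hfree x c hc
  | inr y =>
    have hc' := hc.map (f := (bsSwap G₁ G₂).toHom) (bsSwap G₁ G₂).injective
    exact bs_no_cycle_inl (G₁ := G₂) (G₂ := G₁) H hH2 hH1 ((inf_comm G₂ G₁).trans hmeet)
      (fun l hne hval hchain => hfree l hne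
        (fun g hg => ⟨(hval g hg).1.symm, (hval g hg).2⟩)
        (hchain.imp fun a b hab => ⟨hab.2, hab.1⟩))
      y (c.map (bsSwap G₁ G₂).toHom) hc'

def bsMulHom (G₁ G₂ : Subgroup Γ) (γ : Γ) : bsGraph G₁ G₂ →g bsGraph G₁ G₂ where
  toFun := Sum.map (fun x => γ • x) (fun y => γ • y)
  map_rel' := by
    rintro (x | y) (x' | y') h
    · exact (h : False).elim
    · obtain ⟨ε, h1, h2⟩ := h
      exact ⟨γ * ε, by rw [← h1]; rfl, by rw [← h2]; rfl⟩
    · obtain ⟨ε, h1, h2⟩ := h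
      exact ⟨γ * ε, by rw [← h1]; rfl, by rw [← h2]; rfl⟩
    · exact (h : False).elim

lemma bs_connected (G₁ G₂ : Subgroup Γ)
    (hgen : Subgroup.closure ((G₁ : Set Γ) ∪ (G₂ : Set Γ)) = ⊤) :
    (bsGraph G₁ G₂).Connected := by
  classical
  have edge_self : ∀ γ : Γ,
      (bsGraph G₁ G₂).Adj (Sum.inl (QuotientGroup.mk γ)) (Sum.inr (QuotientGroup.mk γ)) :=
    fun γ => ⟨γ, rfl, rfl⟩
  have smul_reach : ∀ (γ : Γ) {u v}, (bsGraph G₁ G₂).Reachable u v →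
      (bsGraph G₁ G₂).Reachable (Sum.map (fun x => γ • x) (fun y => γ • y) u)
        (Sum.map (fun x => γ • x) (fun y => γ • y) v) :=
    fun γ _ _ h => h.map (bsMulHom G₁ G₂ γ)
  set S : Subgroup Γ :=
    { carrier := {γ | (bsGraph G₁ G₂).Reachable (Sum.inl (QuotientGroup.mk (1 : Γ)) : (Γ ⧸ G₁) ⊕ (Γ ⧸ G₂)) (Sum.inl (QuotientGroup.mk γ)) ∧
        (bsGraph G₁ G₂).Reachable (Sum.inl (QuotientGroup.mk (1 : Γ)) : (Γ ⧸ G₁) ⊕ (Γ ⧸ G₂)) (Sum.inr (QuotientGroup.mk γ))}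
      one_mem' := ⟨SimpleGraph.Reachable.refl _, (edge_self 1).reachable⟩
      mul_mem' := by
        rintro γ δ ⟨hγ1, hγ2⟩ ⟨hδ1, hδ2⟩
        have t1 := smul_reach γ hδ1
        have t2 := smul_reach γ hδ2
        simp only [Sum.map_inl, Sum.map_inr, MulAction.Quotient.smul_mk, smul_eq_mul,
          mul_one] at t1 t2
        exact ⟨hγ1.trans t1, hγ1.trans t2⟩
      inv_mem' := by
        rintro γ ⟨hγ1, _⟩
        have t1 := smul_reach γ⁻¹ hγ1
        simp only [Sum.map_inl, MulAction.Quotient.smul_mk, smul_eq_mul, mul_one,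
          inv_mul_cancel] at t1
        refine ⟨t1.symm, t1.symm.trans (edge_self γ⁻¹).reachable⟩ } with hS
  have hsub : (G₁ : Set Γ) ∪ (G₂ : Set Γ) ⊆ S := by
    rintro g (hg | hg)
    · have h1 : (QuotientGroup.mk g : Γ ⧸ G₁) = QuotientGroup.mk 1 :=
        QuotientGroup.eq.mpr (by simpa using G₁.inv_mem hg)
      refine ⟨by rw [h1], ?_⟩
      have : (bsGraph G₁ G₂).Reachable (Sum.inl (QuotientGroup.mk g))
          (Sum.inr (QuotientGroup.mk g)) := (edge_self g).reachable
      rw [h1] at this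
      exact this
    · have h2 : (QuotientGroup.mk g : Γ ⧸ G₂) = QuotientGroup.mk 1 :=
        QuotientGroup.eq.mpr (by simpa using G₂.inv_mem hg)
      have e1 : (bsGraph G₁ G₂).Reachable (Sum.inl (QuotientGroup.mk (1 : Γ)) : (Γ ⧸ G₁) ⊕ (Γ ⧸ G₂)) (Sum.inr (QuotientGroup.mk g)) := by
        rw [h2]; exact (edge_self 1).reachable
      exact ⟨e1.trans ((edge_self g).reachable.symm), e1⟩
  have hall : ∀ γ : Γ, γ ∈ S := by
    intro γ
    have : γ ∈ Subgroup.closure ((G₁ : Set Γ) ∪ (G₂ : Set Γ)) := by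
      rw [hgen]; exact Subgroup.mem_top γ
    exact Subgroup.closure_le S |>.mpr hsub this
  have hreach : ∀ v, (bsGraph G₁ G₂).Reachable (Sum.inl (QuotientGroup.mk (1 : Γ)) : (Γ ⧸ G₁) ⊕ (Γ ⧸ G₂)) v := by
    rintro (x | y)
    · obtain ⟨γ, rfl⟩ := QuotientGroup.mk_surjective x
      exact (hall γ).1
    · obtain ⟨γ, rfl⟩ := QuotientGroup.mk_surjective y
      exact (hall γ).2
  refine SimpleGraph.Connected.mk ?_
  exact fun u v => (hreach u).symm.trans (hreach v)

end Stmt12Aux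

/-- Let `H ≤ G₁`, `H ≤ G₂` be subgroups of `Γ` with `G₁ ⊓ G₂ = H`, such
that `G₁ ∪ G₂` generates `Γ` and every non-empty alternating product of elements of
`G₁ ∖ H` and `G₂ ∖ H` lies outside `H` (i.e. `Γ = G₁ ∗_H G₂` is the amalgamated free
product).  Then the Bass–Serre graph `G_T` is a tree: it is connected and contains no
cycles. -/
theorem stmt_12 {Γ : Type*} [Group Γ] (G₁ G₂ H : Subgroup Γ)
    (hH1 : H ≤ G₁) (hH2 : H ≤ G₂) (hmeet : G₁ ⊓ G₂ = H)
    (hgen : Subgroup.closure ((G₁ : Set Γ) ∪ (G₂ : Set Γ)) = ⊤)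
    (hfree : ∀ l : List Γ, l ≠ [] →
      (∀ g ∈ l, (g ∈ G₁ ∨ g ∈ G₂) ∧ g ∉ H) →
      l.Chain' (fun g g' => ¬(g ∈ G₁ ∧ g' ∈ G₁) ∧ ¬(g ∈ G₂ ∧ g' ∈ G₂)) →
      l.prod ∉ H) :
    (bsGraph G₁ G₂).IsTree :=
  ⟨Stmt12Aux.bs_connected G₁ G₂ hgen, Stmt12Aux.bs_acyclic H hH1 hH2 hmeet hfree⟩
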